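/- arXiv:1901.00479 — 3 statements merged into one kernel-verified Lean document; each statement's English description precedes it below -/
import Mathlib

section
/- (Correctness of the shift operation when the fan closes.) Let φ be a proper partial edge coloring of a finite simple graph G with color set C, fix for every vertex x a missing color m(x) ∈ M(x), and let F be a fan at a vertex v with leaves x_1, …, x_k. Suppose m(x_k) ∈ M(v). Define φ' by setting φ'(v x_j) = m(x_j) for all 1 ≤ j ≤ k (in particular, the previously uncolored edge v x_1 becomes colored) and φ' = φ on all other edges. Then φ' is a proper partial edge coloring of G whose set of colored edges is the set of colored edges of φ together with v x_1. -/
/-- A proper partial edge coloring of `G` with color set `C`. -/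
def IsProperPartialEC {V : Type*} (G : SimpleGraph V) (C : Set ℕ)
    (φ : Sym2 V → Option ℕ) : Prop :=
  (∀ e : Sym2 V, φ e ≠ none → e ∈ G.edgeSet) ∧
  (∀ (e : Sym2 V) (c : ℕ), φ e = some c → c ∈ C) ∧
  (∀ e₁ e₂ : Sym2 V, e₁ ≠ e₂ → (∃ x : V, x ∈ e₁ ∧ x ∈ e₂) →
    ∀ c : ℕ, φ e₁ = some c → φ e₂ ≠ some c)

/-- `missingColors G C φ x` is the set `M(x)` of colors of `C` not assigned by `φ`
to any edge of `G` incident to `x`. -/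
def missingColors {V : Type*} (G : SimpleGraph V) (C : Set ℕ)
    (φ : Sym2 V → Option ℕ) (x : V) : Set ℕ :=
  {c | c ∈ C ∧ ∀ e ∈ G.edgeSet, x ∈ e → φ e ≠ some c}

/-- **Correctness of the shift operation when the fan closes.**
Let `m` choose a missing color at every vertex, and let `x 0, …, x (k-1)` be the
leaves of a fan at `v`: distinct neighbors of `v` with `v–x 0` uncolored and the
edge `v–x (i+1)` colored `m (x i)`.  If `m` of the last leaf is missing at `v`,
then recoloring each fan edge `v–x j` with `m (x j)` (and leaving all other edges
unchanged) gives a proper partial coloring whose colored edges are those of `φ`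
together with `v–x 0`. -/
theorem shift_fan_closes {V : Type*} [Fintype V] [DecidableEq V]
    (G : SimpleGraph V) (C : Set ℕ) (φ : Sym2 V → Option ℕ)
    (hφ : IsProperPartialEC G C φ)
    (m : V → ℕ) (hm : ∀ x : V, m x ∈ missingColors G C φ x)
    (v : V) (k : ℕ) (hk : 0 < k) (x : Fin k → V)
    (hinj : Function.Injective x)
    (hadj : ∀ i : Fin k, G.Adj v (x i))
    (hfirst : φ s(v, x ⟨0, hk⟩) = none)
    (hfan : ∀ (i : ℕ) (h : i + 1 < k),
      φ s(v, x ⟨i + 1, h⟩) = some (m (x ⟨i, Nat.lt_of_succ_lt h⟩)))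
    (hclose : m (x ⟨k - 1, Nat.sub_lt hk Nat.one_pos⟩) ∈ missingColors G C φ v)
    (φ' : Sym2 V → Option ℕ)
    (hφ'fan : ∀ i : Fin k, φ' s(v, x i) = some (m (x i)))
    (hφ'rest : ∀ e : Sym2 V, (∀ i : Fin k, e ≠ s(v, x i)) → φ' e = φ e) :
    IsProperPartialEC G C φ' ∧
    {e : Sym2 V | φ' e ≠ none} = insert s(v, x ⟨0, hk⟩) {e : Sym2 V | φ e ≠ none} := by
  obtain ⟨hφ1, hφ2, hφ3⟩ := hφ
  have hne : ∀ i : Fin k, v ≠ x i := fun i => (hadj i).ne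
  have hedge : ∀ i : Fin k, s(v, x i) ∈ G.edgeSet := fun i => (hadj i)
  have hfanne : ∀ i j : Fin k, i ≠ j → s(v, x i) ≠ s(v, x j) := by
    intro i j hij h
    rw [Sym2.eq_iff] at h
    rcases h with ⟨-, h⟩ | ⟨h1, -⟩
    · exact hij (hinj h)
    · exact hne j h1
  have hlast : ∀ i : Fin k, ¬ (i.val + 1 < k) → m (x i) ∈ missingColors G C φ v := by
    intro i h
    have hi : i = ⟨k - 1, Nat.sub_lt hk Nat.one_pos⟩ := by
      apply Fin.ext
      have := i.isLt
      simp only []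
      omega
    rw [hi]; exact hclose
  -- key: no φ-edge touching v or x i, other than fan edges, carries color m (x i)
  have key : ∀ (i : Fin k) (e : Sym2 V), (∀ j : Fin k, e ≠ s(v, x j)) →
      (v ∈ e ∨ x i ∈ e) → φ e ≠ some (m (x i)) := by
    intro i e hnf hmem hc
    have heE : e ∈ G.edgeSet := hφ1 e (by rw [hc]; simp)
    rcases hmem with hv | hx
    · by_cases h : i.val + 1 < k
      · have hf : φ s(v, x ⟨i.val + 1, h⟩) = some (m (x i)) := hfan i.val h
        exact hφ3 e s(v, x ⟨i.val + 1, h⟩) (hnf _) ⟨v, hv, by simp⟩ _ hc hf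
      · exact (hlast i h).2 e heE hv hc
    · exact (hm (x i)).2 e heE hx hc
  -- the colors m (x i) are pairwise distinct
  have minj : ∀ i j : Fin k, i ≠ j → m (x i) ≠ m (x j) := by
    intro i j hij heq
    by_cases hi : i.val + 1 < k
    · by_cases hj : j.val + 1 < k
      · have h1 : φ s(v, x ⟨i.val + 1, hi⟩) = some (m (x i)) := hfan i.val hi
        have h2 : φ s(v, x ⟨j.val + 1, hj⟩) = some (m (x j)) := hfan j.val hj
        have hd : s(v, x ⟨i.val + 1, hi⟩) ≠ s(v, x ⟨j.val + 1, hj⟩) := by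
          apply hfanne
          simp only [ne_eq, Fin.mk.injEq]
          intro h
          exact hij (Fin.ext (by omega))
        exact hφ3 _ _ hd ⟨v, by simp, by simp⟩ _ h1 (heq ▸ h2)
      · -- j is the last index, so m (x j) missing at v, but fan edge i+1 has that color
        have h1 : φ s(v, x ⟨i.val + 1, hi⟩) = some (m (x i)) := hfan i.val hi
        rw [heq] at h1
        exact (hlast j hj).2 _ (hedge ⟨i.val + 1, hi⟩) (by simp) h1
    · by_cases hj : j.val + 1 < k
      · have h2 : φ s(v, x ⟨j.val + 1, hj⟩) = some (m (x j)) := hfan j.val hj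
        rw [← heq] at h2
        exact (hlast i hi).2 _ (hedge ⟨j.val + 1, hj⟩) (by simp) h2
      · exact hij (Fin.ext (by have := i.isLt; have := j.isLt; omega))
  constructor
  · refine ⟨?_, ?_, ?_⟩
    · intro e he
      by_cases hE : ∃ i : Fin k, e = s(v, x i)
      · obtain ⟨i, rfl⟩ := hE; exact hedge i
      · push_neg at hE
        rw [hφ'rest e hE] at he
        exact hφ1 e he
    · intro e c hc
      by_cases hE : ∃ i : Fin k, e = s(v, x i)
      · obtain ⟨i, rfl⟩ := hE
        rw [hφ'fan i] at hc
        obtain rfl : m (x i) = c := by injection hc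
        exact (hm (x i)).1
      · push_neg at hE
        rw [hφ'rest e hE] at hc
        exact hφ2 e c hc
    · intro e₁ e₂ h12 hsh c h1 h2
      obtain ⟨w, hw1, hw2⟩ := hsh
      by_cases hE1 : ∃ i : Fin k, e₁ = s(v, x i)
      · obtain ⟨i, rfl⟩ := hE1
        rw [hφ'fan i] at h1
        obtain rfl : m (x i) = c := by injection h1
        by_cases hE2 : ∃ j : Fin k, e₂ = s(v, x j)
        · obtain ⟨j, rfl⟩ := hE2
          rw [hφ'fan j] at h2
          have hij : i ≠ j := fun h => h12 (by rw [h])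
          exact minj i j hij (by injection h2.symm)
        · push_neg at hE2
          rw [hφ'rest e₂ hE2] at h2
          have hmem : v ∈ e₂ ∨ x i ∈ e₂ := by
            rw [Sym2.mem_iff] at hw1
            rcases hw1 with rfl | rfl
            · exact Or.inl hw2
            · exact Or.inr hw2
          exact key i e₂ hE2 hmem h2
      · push_neg at hE1
        rw [hφ'rest e₁ hE1] at h1
        by_cases hE2 : ∃ j : Fin k, e₂ = s(v, x j)
        · obtain ⟨j, rfl⟩ := hE2
          rw [hφ'fan j] at h2
          obtain rfl : m (x j) = c := by injection h2
          have hmem : v ∈ e₁ ∨ x j ∈ e₁ := by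
            rw [Sym2.mem_iff] at hw2
            rcases hw2 with rfl | rfl
            · exact Or.inl hw1
            · exact Or.inr hw1
          exact key j e₁ hE1 hmem h1
        · push_neg at hE2
          rw [hφ'rest e₂ hE2] at h2
          exact hφ3 e₁ e₂ h12 ⟨w, hw1, hw2⟩ c h1 h2
  · ext e
    simp only [Set.mem_setOf_eq, Set.mem_insert_iff]
    constructor
    · intro he
      by_cases hE : ∃ i : Fin k, e = s(v, x i)
      · obtain ⟨i, rfl⟩ := hE
        by_cases h0 : i = ⟨0, hk⟩
        · exact Or.inl (by rw [h0])
        · right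
          have hipos : 0 < i.val := by
            rcases Nat.eq_zero_or_pos i.val with h | h
            · exact absurd (Fin.ext h) h0
            · exact h
          obtain ⟨j, hj⟩ : ∃ j, i.val = j + 1 := ⟨i.val - 1, by omega⟩
          have hjk : j + 1 < k := hj ▸ i.isLt
          have : φ s(v, x ⟨j + 1, hjk⟩) = some (m (x ⟨j, Nat.lt_of_succ_lt hjk⟩)) :=
            hfan j hjk
          have hie : i = ⟨j + 1, hjk⟩ := Fin.ext hj
          rw [hie, this]
          simp
      · push_neg at hE
        rw [hφ'rest e hE] at he
        exact Or.inr he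
    · intro he
      by_cases hE : ∃ i : Fin k, e = s(v, x i)
      · obtain ⟨i, rfl⟩ := hE
        rw [hφ'fan i]
        simp
      · push_neg at hE
        rw [hφ'rest e hE]
        rcases he with he | he
        · exact absurd he (hE ⟨0, hk⟩)
        · exact he
end

section
/- (Bipartite path-avoidance claim, Section 4.3.) Let G be a finite simple bipartite graph, let φ be a proper partial edge coloring of G with color set C, let uv be an uncolored edge, and let α, β ∈ C be distinct colors with α ∈ M(v), β ∈ M(u), and α ∉ M(u). Then the αβ-alternating path starting at u does not contain the vertex v. Consequently, augmenting this path and then coloring uv with α yields a proper partial edge coloring whose colored edges are those of φ together with uv. -/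
/-- A maximal `αβ`-alternating path. -/
def IsMaxAltPath {V : Type*} (G : SimpleGraph V) (φ : Sym2 V → Option ℕ)
    (α β : ℕ) {u v : V} (p : G.Walk u v) : Prop :=
  p.IsPath ∧
  (∀ e ∈ p.edges, φ e = some α ∨ φ e = some β) ∧
  List.Chain' (fun e₁ e₂ => φ e₁ ≠ φ e₂) p.edges ∧
  (∀ e ∈ G.edgeSet, u ∈ e → (φ e = some α ∨ φ e = some β) → e ∈ p.edges) ∧
  (∀ e ∈ G.edgeSet, v ∈ e → (φ e = some α ∨ φ e = some β) → e ∈ p.edges)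

/-- Augmenting along the list of edges `es`: swap the colors `α` and `β` on `es`. -/
def augmentColoring {V : Type*} [DecidableEq V] (φ : Sym2 V → Option ℕ)
    (α β : ℕ) (es : List (Sym2 V)) : Sym2 V → Option ℕ :=
  fun e => if e ∈ es then
    (if φ e = some α then some β else if φ e = some β then some α else φ e)
  else φ e

/-!
Color each dart `(x, y)` of the path by the side `f x` of its tail. The first edge at `u` is
colored `α` (as `β ∈ M(u)`), and both colors and sides alternate along the path, so every dart
whose tail lies on `u`'s side is colored `α`. The path could therefore only enter `v`, which lies
on the other side, along an `α`-edge, impossible as `α ∈ M(v)`.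

The path contains every `α`- or `β`-edge at its vertices (interior vertices already meet both
colors on it, its ends by maximality), so swapping the two colors on it keeps the coloring proper.
Afterwards `α` is missing at both `u` and `v`, and `uv` can be colored `α`.
-/

section

variable {V : Type*} {G : SimpleGraph V} {C : Set ℕ} {φ : Sym2 V → Option ℕ} {α β : ℕ}

theorem IsProperPartialEC.eq_of_mem_of_mem (hφ : IsProperPartialEC G C φ) {e₁ e₂ : Sym2 V}
    {x : V} (hx₁ : x ∈ e₁) (hx₂ : x ∈ e₂) {c : ℕ} (h₁ : φ e₁ = some c) (h₂ : φ e₂ = some c) :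
    e₁ = e₂ := by
  by_contra hne
  exact hφ.2.2 e₁ e₂ hne ⟨x, hx₁, hx₂⟩ c h₁ h₂

theorem SimpleGraph.Walk.mem_of_mem_edges_head? {a z : V} (p : G.Walk a z) {e : Sym2 V}
    (he : e ∈ p.edges.head?) : a ∈ e := by
  cases p with
  | nil => simp at he
  | cons h q =>
    rw [edges_cons, List.head?_cons, Option.mem_some_iff] at he
    exact he ▸ Sym2.mem_mk_left _ _

def IsAltWalk (φ : Sym2 V → Option ℕ) (α β : ℕ) {a z : V} (p : G.Walk a z) : Prop :=
  (∀ e ∈ p.edges, φ e = some α ∨ φ e = some β) ∧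
    List.IsChain (fun e₁ e₂ => φ e₁ ≠ φ e₂) p.edges

namespace IsAltWalk

theorem symm {a z : V} {p : G.Walk a z} (hp : IsAltWalk φ α β p) : IsAltWalk φ β α p :=
  ⟨fun e he => (hp.1 e he).symm, hp.2⟩

theorem of_cons {a b z : V} {h : G.Adj a b} {q : G.Walk b z}
    (hp : IsAltWalk φ α β (.cons h q)) : IsAltWalk φ α β q :=
  ⟨fun e he => hp.1 e (List.mem_cons_of_mem _ he), (List.isChain_cons.mp hp.2).2⟩

theorem color_dart_edge {f : V → Bool} (hbip : ∀ a b : V, G.Adj a b → f a ≠ f b) :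
    ∀ {a z : V} {p : G.Walk a z}, IsAltWalk φ α β p → (∀ e ∈ p.edges.head?, φ e = some α) →
      ∀ d ∈ p.darts, φ d.edge = some (if f d.fst = f a then α else β) := by
  intro a z p
  induction p generalizing α β with
  | nil => simp
  | @cons a b z h q ih =>
    intro hp hhead d hd
    rw [SimpleGraph.Walk.darts_cons, List.mem_cons] at hd
    rcases hd with rfl | hd
    · simpa using hhead _ rfl
    have hqhead : ∀ e ∈ q.edges.head?, φ e = some β := fun e he =>
      ((hp.1 e (List.mem_cons_of_mem _ (List.mem_of_mem_head? he))).resolve_left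
        fun hα => List.isChain_cons.mp hp.2 |>.1 e he (hhead _ rfl ▸ hα.symm))
    rw [ih hp.of_cons.symm hqhead d hd]
    have hab := hbip a b h
    revert hab
    cases f d.fst <;> cases f a <;> cases f b <;> simp

theorem notMem_support {f : V → Bool} (hbip : ∀ a b : V, G.Adj a b → f a ≠ f b) {u v z : V}
    {p : G.Walk u z} (hp : IsAltWalk φ α β p) (hu : ∀ e ∈ p.edges, u ∈ e → φ e ≠ some β)
    (hv : ∀ e ∈ p.edges, v ∈ e → φ e ≠ some α) (huv : f u ≠ f v) : v ∉ p.support := by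
  intro hvp
  have hvu : v ≠ u := fun h => huv (h ▸ rfl)
  obtain ⟨d, hd, rfl⟩ : ∃ d ∈ p.darts, d.snd = v := by
    rw [← List.mem_map, SimpleGraph.Walk.map_snd_darts]
    rw [← p.cons_tail_support, List.mem_cons] at hvp
    exact hvp.resolve_left hvu
  have hhead : ∀ e ∈ p.edges.head?, φ e = some α := fun e he =>
    (hp.1 e (List.mem_of_mem_head? he)).resolve_right
      (hu e (List.mem_of_mem_head? he) (p.mem_of_mem_edges_head? he))
  have hside : f d.fst = f u := by
    have := hbip _ _ d.adj
    revert this huv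
    cases f d.fst <;> cases f d.snd <;> cases f u <;> simp
  refine hv d.edge (List.mem_map_of_mem hd) (Sym2.mem_mk_right _ _) ?_
  simpa [hside] using hp.color_dart_edge hbip hhead d hd

theorem exists_mem_edges_of_mem_support {a z : V} {p : G.Walk a z} (hp : IsAltWalk φ α β p)
    {x : V} (hx : x ∈ p.support) (hxa : x ≠ a) (hxz : x ≠ z) :
    (∃ e ∈ p.edges, x ∈ e ∧ φ e = some α) ∧ (∃ e ∈ p.edges, x ∈ e ∧ φ e = some β) := by
  induction p with
  | nil => exact absurd (List.mem_singleton.mp hx) hxa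
  | @cons a b z h q ih =>
    have hxq : x ∈ q.support := (List.mem_cons.mp hx).resolve_left hxa
    by_cases hxb : x = b
    · subst hxb
      cases q with
      | nil => exact absurd rfl hxz
      | @cons _ c _ h' r =>
        have hcol := hp.1
        have hne : φ s(a, x) ≠ φ s(x, c) := (List.isChain_cons_cons.mp hp.2).1
        simp only [SimpleGraph.Walk.edges_cons, List.mem_cons, forall_eq_or_imp] at hcol
        rcases hcol.1 with h₁ | h₁ <;> rcases hcol.2.1 with h₂ | h₂
        · exact absurd (h₁.trans h₂.symm) hne
        · exact ⟨⟨s(a, x), by simp, by simp, h₁⟩, ⟨s(x, c), by simp, by simp, h₂⟩⟩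
        · exact ⟨⟨s(x, c), by simp, by simp, h₂⟩, ⟨s(a, x), by simp, by simp, h₁⟩⟩
        · exact absurd (h₁.trans h₂.symm) hne
    · obtain ⟨⟨e₁, he₁, hxe₁, hc₁⟩, ⟨e₂, he₂, hxe₂, hc₂⟩⟩ := ih hp.of_cons hxq hxb hxz
      exact ⟨⟨e₁, List.mem_cons_of_mem _ he₁, hxe₁, hc₁⟩,
        ⟨e₂, List.mem_cons_of_mem _ he₂, hxe₂, hc₂⟩⟩

end IsAltWalk

theorem IsMaxAltPath.isAltWalk {a z : V} {p : G.Walk a z} (hp : IsMaxAltPath G φ α β p) :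
    IsAltWalk φ α β p :=
  ⟨hp.2.1, hp.2.2.1⟩

theorem IsMaxAltPath.mem_edges_of_mem_support (hφ : IsProperPartialEC G C φ) {a z : V}
    {p : G.Walk a z} (hp : IsMaxAltPath G φ α β p) {x : V} (hx : x ∈ p.support) {e : Sym2 V}
    (he : e ∈ G.edgeSet) (hxe : x ∈ e) (hc : φ e = some α ∨ φ e = some β) : e ∈ p.edges := by
  by_cases hxa : x = a
  · exact hp.2.2.2.1 e he (hxa ▸ hxe) hc
  by_cases hxz : x = z
  · exact hp.2.2.2.2 e he (hxz ▸ hxe) hc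
  obtain ⟨⟨e₁, he₁, hxe₁, hc₁⟩, ⟨e₂, he₂, hxe₂, hc₂⟩⟩ :=
    hp.isAltWalk.exists_mem_edges_of_mem_support hx hxa hxz
  rcases hc with hc | hc
  · exact hφ.eq_of_mem_of_mem hxe₁ hxe hc₁ hc ▸ he₁
  · exact hφ.eq_of_mem_of_mem hxe₂ hxe hc₂ hc ▸ he₂

section Augment

variable [DecidableEq V] {es : List (Sym2 V)} {e : Sym2 V}

theorem augmentColoring_of_mem (he : e ∈ es) :
    augmentColoring φ α β es e = (φ e).map (Equiv.swap α β) := by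
  simp only [augmentColoring, if_pos he]
  rcases φ e with _ | c
  · simp
  · by_cases hcα : c = α <;> by_cases hcβ : c = β <;> simp_all [Equiv.swap_apply_of_ne_of_ne]

theorem augmentColoring_of_notMem (he : e ∉ es) : augmentColoring φ α β es e = φ e :=
  if_neg he

theorem augmentColoring_eq_some_iff (he : e ∈ es) {c : ℕ} :
    augmentColoring φ α β es e = some c ↔ φ e = some (Equiv.swap α β c) := by
  rw [augmentColoring_of_mem he, Option.map_eq_some_iff]
  constructor
  · rintro ⟨a, ha, rfl⟩
    rw [ha, Equiv.swap_apply_self]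
  · intro h
    exact ⟨_, h, Equiv.swap_apply_self _ _ _⟩

theorem augmentColoring_eq_none_iff : augmentColoring φ α β es e = none ↔ φ e = none := by
  by_cases he : e ∈ es
  · rw [augmentColoring_of_mem he, Option.map_eq_none_iff]
  · rw [augmentColoring_of_notMem he]

theorem IsProperPartialEC.augment (hφ : IsProperPartialEC G C φ) (hα : α ∈ C) (hβ : β ∈ C)
    (hclosed : ∀ e₁ ∈ es, ∀ e₂ ∈ G.edgeSet, (∃ x, x ∈ e₁ ∧ x ∈ e₂) →
      (φ e₂ = some α ∨ φ e₂ = some β) → e₂ ∈ es) :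
    IsProperPartialEC G C (augmentColoring φ α β es) := by
  have hmixed : ∀ e₁ ∈ es, ∀ e₂ ∉ es, (∃ x, x ∈ e₁ ∧ x ∈ e₂) → ∀ c,
      augmentColoring φ α β es e₁ = some c → augmentColoring φ α β es e₂ ≠ some c := by
    intro e₁ he₁ e₂ he₂ ⟨x, hx₁, hx₂⟩ c h₁ h₂
    rw [augmentColoring_eq_some_iff he₁] at h₁
    rw [augmentColoring_of_notMem he₂] at h₂
    by_cases hc : c = α ∨ c = β
    · exact he₂ (hclosed e₁ he₁ e₂ (hφ.1 e₂ (by simp [h₂])) ⟨x, hx₁, hx₂⟩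
        (by rcases hc with rfl | rfl <;> simp [h₂]))
    · rw [not_or] at hc
      rw [Equiv.swap_apply_of_ne_of_ne hc.1 hc.2] at h₁
      exact he₂ (hφ.eq_of_mem_of_mem hx₁ hx₂ h₁ h₂ ▸ he₁)
  refine ⟨fun e he => hφ.1 e (mt augmentColoring_eq_none_iff.mpr he), ?_, ?_⟩
  · intro e c hc
    by_cases he : e ∈ es
    · rw [augmentColoring_eq_some_iff he] at hc
      by_cases hcα : c = α
      · exact hcα ▸ hα
      by_cases hcβ : c = β
      · exact hcβ ▸ hβ
      exact Equiv.swap_apply_of_ne_of_ne hcα hcβ ▸ hφ.2.1 e _ hc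
    · exact hφ.2.1 e c (by rwa [augmentColoring_of_notMem he] at hc)
  · intro e₁ e₂ hne hx c h₁ h₂
    by_cases he₁ : e₁ ∈ es <;> by_cases he₂ : e₂ ∈ es
    · rw [augmentColoring_eq_some_iff he₁] at h₁
      rw [augmentColoring_eq_some_iff he₂] at h₂
      exact hφ.2.2 e₁ e₂ hne hx _ h₁ h₂
    · exact hmixed e₁ he₁ e₂ he₂ hx c h₁ h₂
    · exact hmixed e₂ he₂ e₁ he₁ (hx.imp fun _ => And.symm) c h₂ h₁
    · rw [augmentColoring_of_notMem he₁] at h₁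
      rw [augmentColoring_of_notMem he₂] at h₂
      exact hφ.2.2 e₁ e₂ hne hx c h₁ h₂

theorem mem_missingColors_augmentColoring {x : V} (hα : α ∈ C)
    (hβx : ∀ e ∈ es, x ∈ e → φ e ≠ some β)
    (hαx : ∀ e ∈ G.edgeSet, x ∈ e → φ e = some α → e ∈ es) :
    α ∈ missingColors G C (augmentColoring φ α β es) x := by
  refine ⟨hα, fun e he hxe h => ?_⟩
  by_cases hes : e ∈ es
  · rw [augmentColoring_eq_some_iff hes, Equiv.swap_apply_left] at h
    exact hβx e hes hxe h
  · rw [augmentColoring_of_notMem hes] at h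
    exact hes (hαx e he hxe h)

end Augment

theorem IsProperPartialEC.update [DecidableEq V] {ψ : Sym2 V → Option ℕ}
    (hψ : IsProperPartialEC G C ψ) {u v : V} (huv : G.Adj u v) {c : ℕ}
    (hu : c ∈ missingColors G C ψ u) (hv : c ∈ missingColors G C ψ v) :
    IsProperPartialEC G C (Function.update ψ s(u, v) (some c)) := by
  have hnew : ∀ e ≠ s(u, v), (∃ x, x ∈ s(u, v) ∧ x ∈ e) → ψ e ≠ some c := by
    rintro e - ⟨x, hx, hxe⟩ h
    have he : e ∈ G.edgeSet := hψ.1 e (by simp [h])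
    rcases Sym2.mem_iff.mp hx with rfl | rfl
    · exact hu.2 e he hxe h
    · exact hv.2 e he hxe h
  refine ⟨fun e he => ?_, fun e c' hc' => ?_, fun e₁ e₂ hne hx c' h₁ h₂ => ?_⟩
  · by_cases h : e = s(u, v)
    · exact h ▸ huv
    · exact hψ.1 e (by rwa [Function.update_of_ne h] at he)
  · by_cases h : e = s(u, v)
    · rw [h, Function.update_self, Option.some_inj] at hc'
      exact hc' ▸ hu.1
    · exact hψ.2.1 e c' (by rwa [Function.update_of_ne h] at hc')
  · by_cases h₁' : e₁ = s(u, v) <;> by_cases h₂' : e₂ = s(u, v)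
    · exact hne (h₁'.trans h₂'.symm)
    · rw [h₁', Function.update_self, Option.some_inj] at h₁
      rw [Function.update_of_ne h₂', ← h₁] at h₂
      exact hnew e₂ h₂' (h₁' ▸ hx) h₂
    · rw [h₂', Function.update_self, Option.some_inj] at h₂
      rw [Function.update_of_ne h₁', ← h₂] at h₁
      exact hnew e₁ h₁' (h₂' ▸ hx.imp fun _ => And.symm) h₁
    · rw [Function.update_of_ne h₁'] at h₁
      rw [Function.update_of_ne h₂'] at h₂
      exact hψ.2.2 e₁ e₂ hne hx c' h₁ h₂

end

theorem bipartite_alt_path_avoids_v_general {V : Type*} [DecidableEq V]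
    (G : SimpleGraph V)
    (f : V → Bool) (hbip : ∀ a b : V, G.Adj a b → f a ≠ f b)
    (C : Set ℕ) (φ : Sym2 V → Option ℕ)
    (hφ : IsProperPartialEC G C φ)
    (α β : ℕ)
    (u v : V) (huv : G.Adj u v)
    (hαv : α ∈ missingColors G C φ v) (hβu : β ∈ missingColors G C φ u)
    (z : V) (p : G.Walk u z) (hp : IsMaxAltPath G φ α β p) :
    v ∉ p.support ∧
    IsProperPartialEC G C
      (Function.update (augmentColoring φ α β p.edges) s(u, v) (some α)) ∧
    {e : Sym2 V |
        Function.update (augmentColoring φ α β p.edges) s(u, v) (some α) e ≠ none} =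
      insert s(u, v) {e : Sym2 V | φ e ≠ none} := by
  have hpG : ∀ e ∈ p.edges, e ∈ G.edgeSet := fun e he => p.edges_subset_edgeSet he
  have hv : v ∉ p.support :=
    hp.isAltWalk.notMem_support hbip (fun e he => hβu.2 e (hpG e he))
      (fun e he => hαv.2 e (hpG e he)) (hbip u v huv)
  have hψ : IsProperPartialEC G C (augmentColoring φ α β p.edges) :=
    hφ.augment hαv.1 hβu.1 fun e₁ he₁ e₂ he₂ ⟨x, hx₁, hx₂⟩ =>
      hp.mem_edges_of_mem_support hφ (p.mem_support_of_mem_edges he₁ hx₁) he₂ hx₂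
  have hαu' : α ∈ missingColors G C (augmentColoring φ α β p.edges) u :=
    mem_missingColors_augmentColoring hαv.1 (fun e he => hβu.2 e (hpG e he))
      fun e he hue hα => hp.2.2.2.1 e he hue (Or.inl hα)
  have hαv' : α ∈ missingColors G C (augmentColoring φ α β p.edges) v :=
    mem_missingColors_augmentColoring hαv.1
      (fun e he hve _ => hv (p.mem_support_of_mem_edges he hve))
      fun e he hve hα => absurd hα (hαv.2 e he hve)
  refine ⟨hv, hψ.update huv hαu' hαv', ?_⟩
  ext e
  by_cases h : e = s(u, v) <;> simp [h, Function.update_of_ne, augmentColoring_eq_none_iff]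

/-- **Bipartite path-avoidance claim.** In a bipartite graph, if `u v` is uncolored,
`α ∈ M(v)`, `β ∈ M(u)` and `α ∉ M(u)`, then the maximal `αβ`-alternating path
starting at `u` does not contain `v`; augmenting it and then coloring `u v` with `α`
yields a proper partial coloring whose colored edges are those of `φ` plus `u v`. -/
theorem bipartite_alt_path_avoids_v {V : Type*} [Fintype V] [DecidableEq V]
    (G : SimpleGraph V)
    (f : V → Bool) (hbip : ∀ a b : V, G.Adj a b → f a ≠ f b)
    (C : Set ℕ) (φ : Sym2 V → Option ℕ)
    (hφ : IsProperPartialEC G C φ)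
    (α β : ℕ) (hαβ : α ≠ β) (hαC : α ∈ C) (hβC : β ∈ C)
    (u v : V) (huv : G.Adj u v) (hun : φ s(u, v) = none)
    (hαv : α ∈ missingColors G C φ v) (hβu : β ∈ missingColors G C φ u)
    (hαu : α ∉ missingColors G C φ u)
    (z : V) (p : G.Walk u z) (hp : IsMaxAltPath G φ α β p) :
    v ∉ p.support ∧
    IsProperPartialEC G C
      (Function.update (augmentColoring φ α β p.edges) s(u, v) (some α)) ∧
    {e : Sym2 V |
        Function.update (augmentColoring φ α β p.edges) s(u, v) (some α) e ≠ none} =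
      insert s(u, v) {e : Sym2 V | φ e ≠ none} :=
  bipartite_alt_path_avoids_v_general G f hbip C φ hφ α β u v huv hαv hβu z p hp
end

section
/- (König's edge coloring theorem, the bipartite benchmark obtained by iterating the bipartite extension lemma.) Every finite simple bipartite graph G with maximum degree at most Δ admits a proper edge coloring of all of its edges using at most Δ colors; that is, χ'(G) ≤ Δ. -/
/-!
Colour the edges one at a time (Kempe chains). To colour a new edge `ab` with `Δ` colours,
pick a colour `α` missing at `a` and `β` missing at `b`; they exist because fewer than `Δ`
edges at each endpoint are coloured yet. In the subgraph of `α`- and `β`-edges every vertex has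
degree at most two, so the component of `b` is a path starting at `b` whose colours alternate
`α, β, α, …`. By bipartiteness such a path cannot end at `a`: it would have odd length and end
with an `α`-edge at `a`. Swapping `α` and `β` on this component keeps the colouring proper and
makes `α` missing at both `a` and `b`, so `ab` can be coloured `α`.
-/

open SimpleGraph Finset

section

variable {V : Type*}

def IsProperOn (E : Set (Sym2 V)) (φ : Sym2 V → ℕ) : Prop :=
  ∀ e₁ ∈ E, ∀ e₂ ∈ E, e₁ ≠ e₂ → (∃ x : V, x ∈ e₁ ∧ x ∈ e₂) → φ e₁ ≠ φ e₂

structure IsEdgeColoringOn (E : Set (Sym2 V)) (k : ℕ) (φ : Sym2 V → ℕ) : Prop where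
  lt : ∀ e ∈ E, φ e < k
  ne : IsProperOn E φ

def IsMissingAt (E : Set (Sym2 V)) (φ : Sym2 V → ℕ) (c : ℕ) (v : V) : Prop :=
  ∀ e ∈ E, v ∈ e → φ e ≠ c

theorem IsEdgeColoringOn.update_insert [DecidableEq V] {E : Set (Sym2 V)} {k c : ℕ}
    {φ : Sym2 V → ℕ} {a b : V} (hφ : IsEdgeColoringOn E k φ) (hc : c < k)
    (ha : IsMissingAt E φ c a) (hb : IsMissingAt E φ c b) :
    IsEdgeColoringOn (insert s(a, b) E) k (Function.update φ s(a, b) c) := by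
  have hmissing : ∀ e ∈ E, e ≠ s(a, b) → ∀ x ∈ s(a, b), x ∈ e →
      Function.update φ s(a, b) c e ≠ c := by
    intro e he hne x hx hxe
    rw [Function.update_of_ne hne]
    rcases Sym2.mem_iff.mp hx with rfl | rfl
    exacts [ha e he hxe, hb e he hxe]
  constructor
  · intro e he
    by_cases h : e = s(a, b)
    · simpa [h] using hc
    · simpa [Function.update_of_ne h] using hφ.lt e (he.resolve_left h)
  · rintro e₁ he₁ e₂ he₂ hne ⟨x, hx₁, hx₂⟩
    by_cases h₁ : e₁ = s(a, b)
    · subst h₁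
      simpa using (hmissing e₂ (he₂.resolve_left (Ne.symm hne)) (Ne.symm hne) x hx₁ hx₂).symm
    by_cases h₂ : e₂ = s(a, b)
    · subst h₂
      simpa using hmissing e₁ (he₁.resolve_left h₁) h₁ x hx₂ hx₁
    rw [Function.update_of_ne h₁, Function.update_of_ne h₂]
    exact hφ.ne e₁ (he₁.resolve_left h₁) e₂ (he₂.resolve_left h₂) hne ⟨x, hx₁, hx₂⟩

theorem exists_isMissingAt_of_card_lt [DecidableEq V] (E : Finset (Sym2 V))
    (φ : Sym2 V → ℕ) {k : ℕ} {v : V} (h : #{e ∈ E | v ∈ e} < k) :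
    ∃ c < k, IsMissingAt E φ c v := by
  by_contra! hall
  have hused : range k ⊆ {e ∈ E | v ∈ e}.image φ := by
    intro c hc
    obtain ⟨e, he, hve, rfl⟩ : ∃ e ∈ E, v ∈ e ∧ φ e = c := by
      simpa [IsMissingAt] using hall c (mem_range.mp hc)
    exact mem_image_of_mem φ (mem_filter.mpr ⟨he, hve⟩)
  have := (card_le_card hused).trans card_image_le
  rw [card_range] at this
  omega

theorem SimpleGraph.card_filter_mem_lt_degree [DecidableEq V] {G : SimpleGraph V} {v : V}
    [Fintype (G.neighborSet v)] {E : Finset (Sym2 V)} (hE : ↑E ⊆ G.edgeSet) {e : Sym2 V}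
    (he : e ∈ G.edgeSet) (heE : e ∉ E) (hv : v ∈ e) :
    #{e ∈ E | v ∈ e} < G.degree v := by
  rw [← card_incidenceFinset_eq_degree]
  apply card_lt_card
  rw [ssubset_iff_of_subset]
  · exact ⟨e, by simpa [incidenceSet] using ⟨he, hv⟩, fun h => heE (mem_filter.mp h).1⟩
  · intro e' he'
    obtain ⟨he'E, hve'⟩ := mem_filter.mp he'
    simpa [incidenceSet] using ⟨hE he'E, hve'⟩

theorem SimpleGraph.Walk.exists_adj_rel_of_isPath {H : SimpleGraph V} (r : V → V → Prop)
    (hr : ∀ x y, H.Adj x y → r x y ∨ r y x)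
    (hin : ∀ x y z, H.Adj y x → H.Adj z x → r y x → r z x → y = z) :
    ∀ {u w v : V} (h : H.Adj u w), r u w → ∀ p : H.Walk w v, (cons h p).IsPath →
      ∃ y, H.Adj y v ∧ r y v := by
  intro u w v h huw p
  induction p generalizing u with
  | nil => exact fun _ => ⟨u, h, huw⟩
  | @cons w w' v h' q ih =>
    intro hp
    rcases hr w w' h' with hww' | hw'w
    · exact ih h' hww' hp.of_cons
    · have hu : u ∉ (cons h' q).support := (cons_isPath_iff _ _).mp hp |>.2
      exact absurd (by simp [hin w u w' h h'.symm huw hw'w]) hu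

theorem SimpleGraph.Reachable.exists_adj_rel {H : SimpleGraph V} (r : V → V → Prop)
    (hr : ∀ x y, H.Adj x y → r x y ∨ r y x)
    (hin : ∀ x y z, H.Adj y x → H.Adj z x → r y x → r z x → y = z) {u v : V}
    (hsource : ∀ y, H.Adj y u → ¬ r y u) (huv : H.Reachable u v) (hne : u ≠ v) :
    ∃ y, H.Adj y v ∧ r y v := by
  obtain ⟨p, hp⟩ := huv.exists_isPath
  cases p with
  | nil => exact absurd rfl hne
  | @cons _ w _ h q =>
    have huw : r u w := (hr u w h).resolve_right (hsource w h.symm)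
    exact Walk.exists_adj_rel_of_isPath r hr hin h huw q hp

def kempeGraph (E : Set (Sym2 V)) (φ : Sym2 V → ℕ) (α β : ℕ) : SimpleGraph V :=
  fromEdgeSet {e | e ∈ E ∧ (φ e = α ∨ φ e = β)}

def IsKempeClosed (E : Set (Sym2 V)) (φ : Sym2 V → ℕ) (α β : ℕ) (S : Set V) : Prop :=
  ∀ e ∈ E, (φ e = α ∨ φ e = β) → ∀ x ∈ e, ∀ y ∈ e, x ∈ S → y ∈ S

open Classical in
noncomputable def kempeSwap (φ : Sym2 V → ℕ) (α β : ℕ) (S : Set V) (e : Sym2 V) : ℕ :=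
  if ∃ x ∈ e, x ∈ S then Equiv.swap α β (φ e) else φ e

section kempeSwap

variable {E : Set (Sym2 V)} {φ : Sym2 V → ℕ} {α β : ℕ} {S : Set V}

theorem kempeSwap_of_mem {e : Sym2 V} {v : V} (hv : v ∈ e) (hvS : v ∈ S) :
    kempeSwap φ α β S e = Equiv.swap α β (φ e) :=
  if_pos ⟨v, hv, hvS⟩

theorem kempeSwap_of_notMem
    (hS : IsKempeClosed E φ α β S)
    {e : Sym2 V} (he : e ∈ E) {v : V} (hv : v ∈ e) (hvS : v ∉ S) :
    kempeSwap φ α β S e = φ e := by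
  unfold kempeSwap
  split_ifs with h
  · obtain ⟨x, hx, hxS⟩ := h
    by_cases hcol : φ e = α ∨ φ e = β
    · exact absurd (hS e he hcol x hx v hv hxS) hvS
    · rw [not_or] at hcol
      exact Equiv.swap_apply_of_ne_of_ne hcol.1 hcol.2
  · rfl

theorem IsEdgeColoringOn.kempeSwap {k : ℕ} (hφ : IsEdgeColoringOn E k φ) (hα : α < k)
    (hβ : β < k) (hS : IsKempeClosed E φ α β S) :
    IsEdgeColoringOn E k (kempeSwap φ α β S) := by
  constructor
  · intro e he
    unfold _root_.kempeSwap
    split_ifs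
    · rw [Equiv.swap_apply_def]
      split_ifs
      exacts [hβ, hα, hφ.lt e he]
    · exact hφ.lt e he
  · rintro e₁ he₁ e₂ he₂ hne ⟨x, hx₁, hx₂⟩
    by_cases hxS : x ∈ S
    · rw [kempeSwap_of_mem hx₁ hxS, kempeSwap_of_mem hx₂ hxS, (Equiv.injective _).ne_iff]
      exact hφ.ne e₁ he₁ e₂ he₂ hne ⟨x, hx₁, hx₂⟩
    · rw [kempeSwap_of_notMem hS he₁ hx₁ hxS, kempeSwap_of_notMem hS he₂ hx₂ hxS]
      exact hφ.ne e₁ he₁ e₂ he₂ hne ⟨x, hx₁, hx₂⟩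

end kempeSwap

theorem isKempeClosed_reachable (E : Set (Sym2 V)) (φ : Sym2 V → ℕ) (α β : ℕ) (b : V) :
    IsKempeClosed E φ α β {x | (kempeGraph E φ α β).Reachable b x} := by
  intro e he hcol x hx y hy hbx
  by_cases hxy : x = y
  · exact hxy ▸ hbx
  · have he' : e = s(x, y) := (Sym2.mem_and_mem_iff hxy).mp ⟨hx, hy⟩
    subst he'
    have hadj : (kempeGraph E φ α β).Adj x y := fromEdgeSet_adj _ |>.mpr ⟨⟨he, hcol⟩, hxy⟩
    exact hbx.trans hadj.reachable

theorem not_reachable_kempeGraph {E : Set (Sym2 V)} {φ : Sym2 V → ℕ} (hφ : IsProperOn E φ)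
    (f : V → Bool) (hf : ∀ x y, s(x, y) ∈ E → f x ≠ f y) {α β : ℕ} {a b : V} (hab : f a ≠ f b)
    (ha : IsMissingAt E φ α a) (hb : IsMissingAt E φ β b) :
    ¬ (kempeGraph E φ α β).Reachable b a := by
  -- Orient α-edges away from `b`'s side of the bipartition and β-edges towards it. Every
  -- vertex then has in-degree at most one and `b` is a source, while an in-edge at `a` would be
  -- an α-edge at `a`.
  set H := kempeGraph E φ α β
  have hadj : ∀ {x y}, H.Adj x y →
      s(x, y) ∈ E ∧ (φ s(x, y) = α ∨ φ s(x, y) = β) ∧ f x ≠ f y := fun h =>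
    ⟨h.1.1, h.1.2, hf _ _ h.1.1⟩
  have hbool : ∀ p q r : Bool, p ≠ r → q ≠ r → p = q := by decide
  set r : V → V → Prop := fun x y => (φ s(x, y) = α ↔ f x = f b)
  have hr : ∀ x y, H.Adj x y → r x y ∨ r y x := by
    intro x y hxy
    obtain ⟨-, -, hfxy⟩ := hadj hxy
    simp only [r, Sym2.eq_swap (a := y)]
    revert hfxy
    cases f x <;> cases f y <;> cases f b <;> simp <;> tauto
  have hin : ∀ x y z, H.Adj y x → H.Adj z x → r y x → r z x → y = z := by
    intro x y z hyx hzx hry hrz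
    by_contra hyz
    obtain ⟨hyxE, hcy, hfyx⟩ := hadj hyx
    obtain ⟨hzxE, hcz, hfzx⟩ := hadj hzx
    have hiff : φ s(y, x) = α ↔ φ s(z, x) = α := hry.trans (hbool _ _ _ hfyx hfzx ▸ hrz.symm)
    refine hφ _ hyxE _ hzxE (fun h => hyz (Sym2.congr_left.mp h))
      ⟨x, Sym2.mem_mk_right y x, Sym2.mem_mk_right z x⟩ ?_
    omega
  have hsource : ∀ y, H.Adj y b → ¬ r y b := by
    intro y hyb hry
    obtain ⟨hybE, hcol, hfyb⟩ := hadj hyb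
    have : φ s(y, b) ≠ α := fun h => hfyb (hry.mp h)
    exact hb _ hybE (Sym2.mem_mk_right y b) (hcol.resolve_left this)
  intro hreach
  obtain ⟨y, hya, hy⟩ := hreach.exists_adj_rel r hr hin hsource (ne_of_apply_ne f hab.symm)
  obtain ⟨hyaE, -, hfya⟩ := hadj hya
  exact ha _ hyaE (Sym2.mem_mk_right y a) (hy.mpr (hbool _ _ _ hfya hab.symm))

theorem exists_isEdgeColoringOn_insert [DecidableEq V] {G : SimpleGraph V} [G.LocallyFinite]
    (f : V → Bool) (hf : ∀ a b, G.Adj a b → f a ≠ f b) {k : ℕ} (hk : ∀ v, G.degree v ≤ k)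
    {E : Finset (Sym2 V)} (hE : ↑E ⊆ G.edgeSet) {e : Sym2 V} (he : e ∈ G.edgeSet) (heE : e ∉ E)
    {φ : Sym2 V → ℕ} (hφ : IsEdgeColoringOn E k φ) :
    ∃ ψ, IsEdgeColoringOn (↑(insert e E) : Set (Sym2 V)) k ψ := by
  induction e using Sym2.ind with | h a b => ?_
  have hmissing : ∀ v ∈ s(a, b), ∃ c < k, IsMissingAt E φ c v := fun v hv =>
    exists_isMissingAt_of_card_lt E φ ((card_filter_mem_lt_degree hE he heE hv).trans_le (hk v))
  obtain ⟨α, hα, hαa⟩ := hmissing a (Sym2.mem_mk_left a b)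
  obtain ⟨β, hβ, hβb⟩ := hmissing b (Sym2.mem_mk_right a b)
  obtain ⟨S, hbS, haS, hS⟩ : ∃ S : Set V, b ∈ S ∧ a ∉ S ∧ IsKempeClosed E φ α β S :=
    ⟨{x | (kempeGraph (E : Set (Sym2 V)) φ α β).Reachable b x}, Reachable.refl b,
      not_reachable_kempeGraph hφ.ne f (fun x y h => hf x y (hE h)) (hf a b he) hαa hβb,
      isKempeClosed_reachable _ φ α β b⟩
  refine ⟨Function.update (kempeSwap φ α β S) s(a, b) α, ?_⟩
  rw [coe_insert]
  refine (hφ.kempeSwap hα hβ hS).update_insert hα ?_ ?_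
  · intro e' he' hae'
    rw [kempeSwap_of_notMem hS he' hae' haS]
    exact hαa e' he' hae'
  · intro e' he' hbe'
    rw [kempeSwap_of_mem hbe' hbS, Ne, Equiv.swap_apply_eq_iff, Equiv.swap_apply_left]
    exact hβb e' he' hbe'

theorem exists_isEdgeColoringOn_of_subset [DecidableEq V] {G : SimpleGraph V} [G.LocallyFinite]
    (f : V → Bool) (hf : ∀ a b, G.Adj a b → f a ≠ f b) {k : ℕ} (hk : ∀ v, G.degree v ≤ k)
    (E : Finset (Sym2 V)) (hE : ↑E ⊆ G.edgeSet) :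
    ∃ φ, IsEdgeColoringOn (E : Set (Sym2 V)) k φ := by
  induction E using Finset.induction_on with
  | empty => exact ⟨0, by simp, by simp [IsProperOn]⟩
  | insert e E heE ih =>
    rw [coe_insert, Set.insert_subset_iff] at hE
    obtain ⟨φ, hφ⟩ := ih hE.2
    exact exists_isEdgeColoringOn_insert f hf hk hE.2 hE.1 heE hφ

end

theorem koenig_edge_coloring_general {V : Type*} [Fintype V]
    (G : SimpleGraph V) [DecidableRel G.Adj]
    (f : V → Bool) (hbip : ∀ a b : V, G.Adj a b → f a ≠ f b)
    (Δ : ℕ) (hΔ : ∀ v : V, G.degree v ≤ Δ) :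
    ∃ φ : Sym2 V → ℕ,
      (∀ e ∈ G.edgeSet, φ e < Δ) ∧
      (∀ e₁ ∈ G.edgeSet, ∀ e₂ ∈ G.edgeSet,
        e₁ ≠ e₂ → (∃ x : V, x ∈ e₁ ∧ x ∈ e₂) → φ e₁ ≠ φ e₂) := by
  classical
  obtain ⟨φ, hφ⟩ := exists_isEdgeColoringOn_of_subset f hbip hΔ G.edgeFinset
    (coe_edgeFinset G).subset
  rw [coe_edgeFinset] at hφ
  exact ⟨φ, hφ.lt, hφ.ne⟩

/-- **König's edge coloring theorem.** Every finite simple bipartite graph with maximum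
degree at most `Δ` admits a proper edge coloring of all of its edges with at most
`Δ` colors. -/
theorem koenig_edge_coloring {V : Type*} [Fintype V] [DecidableEq V]
    (G : SimpleGraph V) [DecidableRel G.Adj]
    (f : V → Bool) (hbip : ∀ a b : V, G.Adj a b → f a ≠ f b)
    (Δ : ℕ) (hΔ : ∀ v : V, G.degree v ≤ Δ) :
    ∃ φ : Sym2 V → ℕ,
      (∀ e ∈ G.edgeSet, φ e < Δ) ∧
      (∀ e₁ ∈ G.edgeSet, ∀ e₂ ∈ G.edgeSet,
        e₁ ≠ e₂ → (∃ x : V, x ∈ e₁ ∧ x ∈ e₂) → φ e₁ ≠ φ e₂) :=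
  koenig_edge_coloring_general G f hbip Δ hΔ
end
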